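/- Let λ, μ : ℝ → ℝ be continuous nonnegative functions, let k ≥ 2 be an integer, and let T > 0. If g : ℝ → ℝ is differentiable on [0, T] with g(0) = 0 and g'(t) = -(μ(t) + λ(t)) · g(t) + μ(t) · f_{k-1}(t; λ, μ) + λ(t) for all t ∈ [0, T], then g(t) = f_k(t; λ, μ) for all t ∈ [0, T]. -/

import Mathlib

open MeasureTheory Real Set Filter Topology intervalIntegral

/-- The upper incomplete Gamma function `Γ(k, x) = ∫_x^∞ s^{k-1} e^{-s} ds`. -/
noncomputable def uGamma (k : ℕ) (x : ℝ) : ℝ :=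
  ∫ s in Set.Ioi x, s ^ (k - 1) * Real.exp (-s)

/-- `f_k(t; λ, μ) = (1/(k-1)!) ∫_0^t λ(τ) exp(-∫_τ^t λ) Γ(k, ∫_τ^t μ) dτ`. -/
noncomputable def fk (k : ℕ) (lam mu : ℝ → ℝ) (t : ℝ) : ℝ :=
  (1 / (Nat.factorial (k - 1) : ℝ)) *
    ∫ τ in (0:ℝ)..t,
      lam τ * Real.exp (-∫ x in τ..t, lam x) * uGamma k (∫ x in τ..t, mu x)

/-!
With `e_n(x) = ∑_{j<n} x^j / j!` one has `Γ(n+1, x) = n! e^{-x} e_{n+1}(x)`, so for primitives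
`Λ, M` of `λ, μ`, `e^{Λ(t)+M(t)} f_{n+1}(t) = ∫_0^t λ(τ) e^{Λ(τ)+M(τ)} e_{n+1}(M(t) - M(τ)) dτ`.
Since `e_{n+1}' = e_n`, differentiating under the integral shows that `f_k` solves the same
linear equation as `g`. The difference `h` then satisfies `h' = -(λ + μ) h`, `h(0) = 0`, so
`e^{Λ+M} h` is constant, hence zero.
-/

open Finset Nat Asymptotics

noncomputable def truncExp (n : ℕ) (x : ℝ) : ℝ :=
  ∑ j ∈ range n, x ^ j / j !

theorem truncExp_succ (n : ℕ) (x : ℝ) : truncExp (n + 1) x = truncExp n x + x ^ n / n ! :=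
  sum_range_succ _ _

theorem truncExp_succ_zero (n : ℕ) : truncExp (n + 1) 0 = 1 := by
  simp [truncExp, sum_range_succ']

theorem hasDerivAt_truncExp_succ (n : ℕ) (x : ℝ) :
    HasDerivAt (truncExp (n + 1)) (truncExp n x) x := by
  induction n with
  | zero =>
    rw [show truncExp 1 = fun _ => 1 from funext fun y => by simp [truncExp]]
    exact hasDerivAt_const x 1
  | succ n ih =>
    have hpow : HasDerivAt (fun y : ℝ => y ^ (n + 1) / (n + 1)!) (x ^ n / n !) x := by
      refine ((hasDerivAt_pow (n + 1) x).div_const ((n + 1)! : ℝ)).congr_deriv ?_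
      push_cast [factorial_succ]
      field_simp
    rw [show truncExp (n + 2) = fun y => truncExp (n + 1) y + y ^ (n + 1) / (n + 1)! from
      funext fun y => truncExp_succ _ y, truncExp_succ]
    exact ih.add hpow

theorem tendsto_exp_neg_mul_truncExp_atTop (n : ℕ) :
    Tendsto (fun s => exp (-s) * truncExp n s) atTop (𝓝 0) := by
  have h := tendsto_finsetSum (range n) fun j _ =>
    (tendsto_pow_mul_exp_neg_atTop_nhds_zero j).div_const (j ! : ℝ)
  simp only [zero_div, sum_const_zero] at h
  refine h.congr fun s => ?_
  rw [truncExp, mul_sum]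
  exact sum_congr rfl fun j _ => by ring

theorem integrableOn_pow_mul_exp_neg_Ioi (n : ℕ) (x : ℝ) :
    IntegrableOn (fun s : ℝ => s ^ n * exp (-s)) (Ioi x) := by
  refine integrable_of_isBigO_exp_neg one_half_pos (by fun_prop) ?_
  refine ((isLittleO_pow_exp_pos_mul_atTop n one_half_pos).mul_isBigO
    (isBigO_refl (fun s => exp (-s)) atTop)).isBigO.congr_right fun s => ?_
  rw [← exp_add]
  ring_nf

theorem integral_Ioi_pow_mul_exp_neg (n : ℕ) (x : ℝ) :
    ∫ s in Ioi x, s ^ n * exp (-s) = n ! * exp (-x) * truncExp (n + 1) x := by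
  have hderiv : ∀ s, HasDerivAt (fun s => -(n ! * (exp (-s) * truncExp (n + 1) s)))
      (s ^ n * exp (-s)) s := fun s => by
    refine (((hasDerivAt_neg s).exp.mul (hasDerivAt_truncExp_succ n s)).const_mul
      (n ! : ℝ)).neg.congr_deriv ?_
    rw [truncExp_succ]
    field_simp
    ring
  have hlim := ((tendsto_exp_neg_mul_truncExp_atTop (n + 1)).const_mul (n ! : ℝ)).neg
  rw [mul_zero, neg_zero] at hlim
  rw [integral_Ioi_of_hasDerivAt_of_tendsto (hderiv x).continuousAt.continuousWithinAt
    (fun s _ => hderiv s) (integrableOn_pow_mul_exp_neg_Ioi n x) hlim]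
  ring

theorem uGamma_succ (n : ℕ) (x : ℝ) : uGamma (n + 1) x = n ! * exp (-x) * truncExp (n + 1) x := by
  rw [uGamma, Nat.add_sub_cancel, integral_Ioi_pow_mul_exp_neg]

theorem hasDerivAt_integral_of_eq_sum_mul {ι : Type*} (s : Finset ι) (a b : ι → ℝ → ℝ)
    (a' : ι → ℝ) {F : ℝ → ℝ → ℝ} {F' : ℝ → ℝ} {t : ℝ}
    (hF : ∀ r τ, F r τ = ∑ i ∈ s, a i r * b i τ) (ha : ∀ i ∈ s, HasDerivAt (a i) (a' i) t)
    (hb : ∀ i ∈ s, Continuous (b i)) (hF' : ∀ τ, HasDerivAt (F · τ) (F' τ) t) :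
    HasDerivAt (fun r => ∫ τ in (0 : ℝ)..r, F r τ) (F t t + ∫ τ in (0 : ℝ)..t, F' τ) t := by
  have hF'_eq : ∀ τ, F' τ = ∑ i ∈ s, a' i * b i τ := fun τ =>
    (hF' τ).unique <| (HasDerivAt.fun_sum fun i hi => (ha i hi).mul_const (b i τ))
      |>.congr_of_eventuallyEq (Eventually.of_forall fun r => hF r τ)
  have hint : ∀ i ∈ s, ∀ c r, IntervalIntegrable (fun τ => c * b i τ) volume 0 r :=
    fun i hi c r => ((hb i hi).const_mul c).intervalIntegrable 0 r
  have hsplit : ∀ r, ∫ τ in (0 : ℝ)..r, F r τ = ∑ i ∈ s, a i r * ∫ τ in (0 : ℝ)..r, b i τ := by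
    intro r
    simp_rw [hF, intervalIntegral.integral_finsetSum fun i hi => hint i hi (a i r) r,
      intervalIntegral.integral_const_mul]
  have hprim : ∀ i ∈ s, HasDerivAt (fun r => ∫ τ in (0 : ℝ)..r, b i τ) (b i t) t := fun i hi =>
    ((hb i hi).integral_hasStrictDerivAt 0 t).hasDerivAt
  have hsum := HasDerivAt.fun_sum fun i hi => (ha i hi).mul (hprim i hi)
  rw [funext hsplit]
  refine hsum.congr_deriv ?_
  simp_rw [hF, hF'_eq, intervalIntegral.integral_finsetSum fun i hi => hint i hi (a' i) t,
    intervalIntegral.integral_const_mul, ← sum_add_distrib]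
  exact sum_congr rfl fun i _ => by ring

theorem hasDerivAt_integral_mul_truncExp (n : ℕ) {u w : ℝ → ℝ} {d t : ℝ} (hu : Continuous u)
    (hut : HasDerivAt u d t) (hw : Continuous w) :
    HasDerivAt (fun r => ∫ τ in (0 : ℝ)..r, w τ * truncExp (n + 1) (u r - u τ))
      (w t + d * ∫ τ in (0 : ℝ)..t, w τ * truncExp n (u t - u τ)) t := by
  -- the binomial theorem separates the variables `r` and `τ` of the kernel
  have hsep : ∀ r τ, w τ * truncExp (n + 1) (u r - u τ) =
      ∑ p ∈ (range (n + 1)).sigma (fun j => range (j + 1)), u r ^ p.2 *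
        (w τ * ((-1) ^ (p.2 + p.1) * u τ ^ (p.1 - p.2) * p.1.choose p.2 / p.1 !)) := by
    intro r τ
    rw [truncExp, mul_sum, sum_sigma]
    refine sum_congr rfl fun j _ => ?_
    rw [sub_pow, sum_div, mul_sum]
    exact sum_congr rfl fun i _ => by ring
  have hkernel : ∀ τ, HasDerivAt (fun r => w τ * truncExp (n + 1) (u r - u τ))
      (w τ * (truncExp n (u t - u τ) * d)) t := fun τ =>
    ((hasDerivAt_truncExp_succ n _).comp t (hut.sub_const (u τ))).const_mul (w τ)
  refine (hasDerivAt_integral_of_eq_sum_mul _ _ _ _ hsep (fun p _ => hut.pow p.2)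
    (fun p _ => by fun_prop) hkernel).congr_deriv ?_
  rw [sub_self, truncExp_succ_zero, mul_one, ← intervalIntegral.integral_const_mul]
  congr 1
  exact integral_congr fun τ _ => by ring

section fk

variable {lam mu : ℝ → ℝ}

theorem exp_add_mul_fk_succ {Λ M : ℝ → ℝ} (hΛ : ∀ x, HasDerivAt Λ (lam x) x)
    (hM : ∀ x, HasDerivAt M (mu x) x) (hlam : Continuous lam) (hmu : Continuous mu) (n : ℕ)
    (t : ℝ) :
    exp (Λ t + M t) * fk (n + 1) lam mu t =
      ∫ τ in (0 : ℝ)..t, lam τ * exp (Λ τ + M τ) * truncExp (n + 1) (M t - M τ) := by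
  rw [fk, Nat.add_sub_cancel, ← mul_assoc, ← intervalIntegral.integral_const_mul]
  refine integral_congr fun τ _ => ?_
  rw [integral_eq_sub_of_hasDerivAt (fun x _ => hΛ x) (hlam.intervalIntegrable τ t),
    integral_eq_sub_of_hasDerivAt (fun x _ => hM x) (hmu.intervalIntegrable τ t), uGamma_succ]
  have hexp : exp (Λ t + M t) * exp (-(Λ t - Λ τ)) * exp (-(M t - M τ)) = exp (Λ τ + M τ) := by
    rw [← exp_add, ← exp_add]
    ring_nf
  rw [← hexp]
  field_simp

theorem hasDerivAt_fk (hlam : Continuous lam) (hmu : Continuous mu) (n : ℕ) (t : ℝ) :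
    HasDerivAt (fk (n + 2) lam mu)
      (-(mu t + lam t) * fk (n + 2) lam mu t + mu t * fk (n + 1) lam mu t + lam t) t := by
  set Λ := fun r => ∫ x in (0 : ℝ)..r, lam x
  set M := fun r => ∫ x in (0 : ℝ)..r, mu x
  have hΛ : ∀ x, HasDerivAt Λ (lam x) x := fun x =>
    (hlam.integral_hasStrictDerivAt 0 x).hasDerivAt
  have hM : ∀ x, HasDerivAt M (mu x) x := fun x =>
    (hmu.integral_hasStrictDerivAt 0 x).hasDerivAt
  have hfk : fk (n + 2) lam mu =
      fun r => exp (-(Λ r + M r)) * (exp (Λ r + M r) * fk (n + 2) lam mu r) :=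
    funext fun r => by rw [← mul_assoc, ← exp_add, neg_add_cancel, exp_zero, one_mul]
  have hΛc : Continuous Λ := continuous_iff_continuousAt.2 fun x => (hΛ x).continuousAt
  have hMc : Continuous M := continuous_iff_continuousAt.2 fun x => (hM x).continuousAt
  have hN : HasDerivAt (fun r => exp (Λ r + M r) * fk (n + 2) lam mu r)
      (lam t * exp (Λ t + M t) + mu t * (exp (Λ t + M t) * fk (n + 1) lam mu t)) t := by
    simp_rw [exp_add_mul_fk_succ hΛ hM hlam hmu]
    exact hasDerivAt_integral_mul_truncExp (n + 1) hMc (hM t) (by fun_prop)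
  have hE : HasDerivAt (fun r => exp (-(Λ r + M r))) (exp (-(Λ t + M t)) * -(lam t + mu t)) t :=
    ((hΛ t).add (hM t)).neg.exp
  refine (hE.mul hN).congr_of_eventuallyEq (Eventually.of_forall (congrFun hfk))
    |>.congr_deriv ?_
  rw [exp_neg]
  field_simp
  ring

end fk

theorem eq_zero_of_hasDerivWithinAt_neg_mul_self {h c : ℝ → ℝ} {a b : ℝ} (hc : Continuous c)
    (ha : h a = 0) (hh : ∀ t ∈ Icc a b, HasDerivWithinAt h (-c t * h t) (Icc a b) t) :
    ∀ t ∈ Icc a b, h t = 0 := by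
  -- integrating factor: `exp (∫ c) * h` is constant
  have hG : ∀ t ∈ Icc a b,
      HasDerivWithinAt (fun r => exp (∫ x in a..r, c x) * h r) 0 (Icc a b) t := fun t ht =>
    ((hc.integral_hasStrictDerivAt a t).hasDerivAt.exp.hasDerivWithinAt.mul (hh t ht)).congr_deriv
      (by ring)
  have hconst := constant_of_has_deriv_right_zero (fun t ht => (hG t ht).continuousWithinAt)
    fun t ht => (hG t (Ico_subset_Icc_self ht)).mono_of_mem_nhdsWithin (Icc_mem_nhdsGE_of_mem ht)
  intro t ht
  simpa [ha] using hconst t ht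

theorem stmt2_general (lam mu : ℝ → ℝ) (hlamc : Continuous lam) (hmuc : Continuous mu)
    (k : ℕ) (hk : 2 ≤ k) (T : ℝ)
    (g : ℝ → ℝ) (hg0 : g 0 = 0)
    (hg : ∀ t ∈ Set.Icc (0:ℝ) T,
      HasDerivWithinAt g
        (-(mu t + lam t) * g t + mu t * fk (k - 1) lam mu t + lam t) (Set.Icc 0 T) t) :
    ∀ t ∈ Set.Icc (0:ℝ) T, g t = fk k lam mu t := by
  obtain ⟨n, rfl⟩ : ∃ n, k = n + 2 := ⟨k - 2, by omega⟩
  intro t ht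
  refine sub_eq_zero.1 <| eq_zero_of_hasDerivWithinAt_neg_mul_self (hmuc.add hlamc)
    (h := fun r => g r - fk (n + 2) lam mu r) (by simp [hg0, fk]) (fun s hs => ?_) t ht
  refine ((hg s hs).sub (hasDerivAt_fk hlamc hmuc n s).hasDerivWithinAt).congr_deriv ?_
  rw [show n + 2 - 1 = n + 1 from rfl, Pi.add_apply]
  ring

/-- uniqueness of the solution of the ODE satisfied by `f_k` on `[0, T]`. -/
theorem stmt2 (lam mu : ℝ → ℝ) (hlamc : Continuous lam) (hmuc : Continuous mu)
    (hlam : ∀ x, 0 ≤ lam x) (hmu : ∀ x, 0 ≤ mu x)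
    (k : ℕ) (hk : 2 ≤ k) (T : ℝ) (hT : 0 < T)
    (g : ℝ → ℝ) (hg0 : g 0 = 0)
    (hg : ∀ t ∈ Set.Icc (0:ℝ) T,
      HasDerivWithinAt g
        (-(mu t + lam t) * g t + mu t * fk (k - 1) lam mu t + lam t) (Set.Icc 0 T) t) :
    ∀ t ∈ Set.Icc (0:ℝ) T, g t = fk k lam mu t :=
  stmt2_general lam mu hlamc hmuc k hk T g hg0 hg
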